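/- arXiv:0904.2918 — 2 statements merged into one kernel-verified Lean document; each statement's English description precedes it below -/
import Mathlib

section
/- Fix a nonnegative integer ℓ and define N(a,b,c) ∈ {0,1} by: N(a,b,c) = 1 iff a,b,c ≤ ℓ, a+b+c is even, |a-b| ≤ c ≤ a+b, and a+b+c ≤ 2ℓ; else 0. Let c(x) = x²/2 + x. Suppose λ₁,λ₂,λ₃,λ₄ are nonnegative integers with λ₁+λ₂+λ₃+λ₄ even, each λ_i ≤ ℓ, and λ₁+λ₂+λ₃+λ₄ ≤ 2ℓ. Then, with r = ∑_{μ=0}^{ℓ} N(λ₁,λ₂,μ)·N(μ,λ₃,λ₄), one has r·(c(λ₁)+c(λ₂)+c(λ₃)+c(λ₄)) = ∑_{μ=0}^{ℓ} c(μ)·( N(λ₁,λ₂,μ)N(λ₃,λ₄,μ) + N(λ₁,λ₃,μ)N(λ₂,λ₄,μ) + N(λ₁,λ₄,μ)N(λ₂,λ₃,μ) ). -/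
open Finset

/-- The rank of the 3-point level-`ℓ` conformal block for `sl₂`. -/
def slTwoRank (ℓ a b c : ℕ) : ℕ :=
  if a ≤ ℓ ∧ b ≤ ℓ ∧ c ≤ ℓ ∧ Even (a + b + c) ∧
      ((a : ℤ) - (b : ℤ)).natAbs ≤ c ∧ c ≤ a + b ∧ a + b + c ≤ 2 * ℓ
  then 1 else 0

/-- The normalized Casimir eigenvalue `c(x) = x²/2 + x` for `sl₂`. -/
def casimir (x : ℕ) : ℚ := (x : ℚ) ^ 2 / 2 + (x : ℚ)
/-!
For the pairing `(ab|cd)` the weights `μ` with `N(a,b,μ) N(c,d,μ) = 1` are those with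
`max(|a-b|, |c-d|) ≤ μ ≤ min(a+b, c+d)` and `μ ≡ a+b (mod 2)`; the level conditions hold
automatically once the total weight is at most `2ℓ`. Put `σ = (a+b+c+d)/2` and
`x = |a+b-σ|`, `y = |a+c-σ|`, `z = |a+d-σ|`. Then this range is `y+z, y+z+2, …, σ-x`, so the
three pairings give progressions starting at `y+z`, `x+z`, `x+y` with the same number `m+1` of
terms, where `x+y+z+2m = σ`. Summing the Casimir over them, the identity reduces to
`a²+b²+c²+d² = σ²+x²+y²+z²`.
-/

theorem natAbs_sub_eq_dist (a b : ℕ) : ((a : ℤ) - b).natAbs = a.dist b := by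
  unfold Nat.dist; omega

theorem cast_dist_sq {R : Type*} [CommRing R] (a b : ℕ) :
    ((a.dist b : ℕ) : R) ^ 2 = ((a : R) - b) ^ 2 := by
  rcases le_total a b with h | h
  · rw [Nat.dist_eq_sub_of_le h, Nat.cast_sub h]; ring
  · rw [Nat.dist_eq_sub_of_le_right h, Nat.cast_sub h]

theorem dist_mod_two (a b : ℕ) : a.dist b % 2 = (a + b) % 2 := by
  unfold Nat.dist; omega

theorem slTwoRank_rotate (ℓ a b c : ℕ) : slTwoRank ℓ a b c = slTwoRank ℓ b c a := by
  simp only [slTwoRank, natAbs_sub_eq_dist]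
  refine if_congr ?_ rfl rfl
  simp only [Nat.even_iff, Nat.dist]
  omega

theorem mem_image_range_two_mul {L m μ : ℕ} :
    μ ∈ (range (m + 1)).image (fun j => L + 2 * j) ↔
      L ≤ μ ∧ μ ≤ L + 2 * m ∧ μ % 2 = L % 2 := by
  simp only [mem_image, mem_range]
  constructor
  · rintro ⟨j, hj, rfl⟩
    omega
  · rintro ⟨hLμ, hμ, hpar⟩
    exact ⟨(μ - L) / 2, by omega, by omega⟩

section Pairing

variable {ℓ a b c d σ m : ℕ}

theorem max_dist_dist_eq (hσ : a + b + c + d = 2 * σ) :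
    max (a.dist b) (c.dist d) = (a + c).dist σ + (a + d).dist σ := by
  unfold Nat.dist; omega

theorem min_add_add_add_dist_eq (hσ : a + b + c + d = 2 * σ) :
    min (a + b) (c + d) + (a + b).dist σ = σ := by
  unfold Nat.dist; omega

theorem slTwoRank_mul_slTwoRank_eq_ite (ha : a ≤ ℓ) (hb : b ≤ ℓ) (hc : c ≤ ℓ) (hd : d ≤ ℓ)
    (hσ : a + b + c + d = 2 * σ) (hσℓ : σ ≤ ℓ) (μ : ℕ) :
    slTwoRank ℓ a b μ * slTwoRank ℓ c d μ =
      if max (a.dist b) (c.dist d) ≤ μ ∧ μ ≤ min (a + b) (c + d) ∧ Even (a + b + μ)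
      then 1 else 0 := by
  simp only [slTwoRank, natAbs_sub_eq_dist, ite_zero_mul_ite_zero, mul_one]
  refine if_congr ?_ rfl rfl
  simp only [Nat.even_iff]
  omega

theorem slTwoRank_mul_slTwoRank_eq_zero (hσ : a + b + c + d = 2 * σ)
    (hD : σ < (a + b).dist σ + (a + c).dist σ + (a + d).dist σ) (μ : ℕ) :
    slTwoRank ℓ a b μ * slTwoRank ℓ c d μ = 0 := by
  simp only [slTwoRank, natAbs_sub_eq_dist, ite_zero_mul_ite_zero, mul_one, Nat.even_iff]
  have hmax := max_dist_dist_eq hσ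
  have hmin := min_add_add_add_dist_eq hσ
  exact if_neg (by omega)

theorem dist_add_dist_add_dist_mod_two (hσ : a + b + c + d = 2 * σ) :
    ((a + b).dist σ + (a + c).dist σ + (a + d).dist σ) % 2 = σ % 2 := by
  have hx := dist_mod_two (a + b) σ
  have hy := dist_mod_two (a + c) σ
  have hz := dist_mod_two (a + d) σ
  omega

theorem exists_add_two_mul_eq (hσ : a + b + c + d = 2 * σ)
    (hD : (a + b).dist σ + (a + c).dist σ + (a + d).dist σ ≤ σ) :
    ∃ m, (a + b).dist σ + (a + c).dist σ + (a + d).dist σ + 2 * m = σ :=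
  have hpar := dist_add_dist_add_dist_mod_two hσ
  ⟨(σ - ((a + b).dist σ + (a + c).dist σ + (a + d).dist σ)) / 2, by omega⟩

theorem slTwoRank_mul_slTwoRank (ha : a ≤ ℓ) (hb : b ≤ ℓ) (hc : c ≤ ℓ) (hd : d ≤ ℓ)
    (hσ : a + b + c + d = 2 * σ) (hσℓ : σ ≤ ℓ)
    (hm : (a + b).dist σ + (a + c).dist σ + (a + d).dist σ + 2 * m = σ) (μ : ℕ) :
    slTwoRank ℓ a b μ * slTwoRank ℓ c d μ =
      if μ ∈ (range (m + 1)).image (fun j => (a + c).dist σ + (a + d).dist σ + 2 * j)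
      then 1 else 0 := by
  have hmax := max_dist_dist_eq hσ
  have hmin := min_add_add_add_dist_eq hσ
  have hy := dist_mod_two (a + c) σ
  have hz := dist_mod_two (a + d) σ
  rw [slTwoRank_mul_slTwoRank_eq_ite ha hb hc hd hσ hσℓ]
  simp only [mem_image_range_two_mul, Nat.even_iff]
  exact if_congr (by omega) rfl rfl

theorem sum_mul_slTwoRank_mul_slTwoRank {R : Type*} [Semiring R] (f : ℕ → R)
    (ha : a ≤ ℓ) (hb : b ≤ ℓ) (hc : c ≤ ℓ) (hd : d ≤ ℓ)
    (hσ : a + b + c + d = 2 * σ) (hσℓ : σ ≤ ℓ)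
    (hm : (a + b).dist σ + (a + c).dist σ + (a + d).dist σ + 2 * m = σ) :
    ∑ μ ∈ range (ℓ + 1), f μ * ((slTwoRank ℓ a b μ * slTwoRank ℓ c d μ : ℕ) : R) =
      ∑ j ∈ range (m + 1), f ((a + c).dist σ + (a + d).dist σ + 2 * j) := by
  simp only [slTwoRank_mul_slTwoRank ha hb hc hd hσ hσℓ hm, Nat.cast_ite, Nat.cast_one,
    Nat.cast_zero, mul_ite, mul_one, mul_zero]
  rw [sum_ite_mem, inter_eq_right.mpr, sum_image]
  · intro i _ j _ hij
    simpa using hij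
  · intro μ hμ
    rw [mem_image_range_two_mul] at hμ
    rw [mem_range]
    unfold Nat.dist at *
    omega

theorem sum_slTwoRank_mul_slTwoRank (ha : a ≤ ℓ) (hb : b ≤ ℓ) (hc : c ≤ ℓ) (hd : d ≤ ℓ)
    (hσ : a + b + c + d = 2 * σ) (hσℓ : σ ≤ ℓ)
    (hm : (a + b).dist σ + (a + c).dist σ + (a + d).dist σ + 2 * m = σ) :
    ∑ μ ∈ range (ℓ + 1), slTwoRank ℓ a b μ * slTwoRank ℓ c d μ = m + 1 := by
  simpa using sum_mul_slTwoRank_mul_slTwoRank (R := ℕ) 1 ha hb hc hd hσ hσℓ hm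

end Pairing

theorem sum_casimir_two_mul (L m : ℕ) :
    ∑ j ∈ range (m + 1), casimir (L + 2 * j) =
      (m + 1) * casimir L + (L + 1) * (m + 1) * m + (m + 1) * m * (2 * m + 1) / 3 := by
  induction m with
  | zero => simp
  | succ m ih =>
    rw [sum_range_succ, ih]
    simp only [casimir]
    push_cast
    ring

theorem casimir_sum_pairings {a b c d σ m : ℕ} (hσ : a + b + c + d = 2 * σ)
    (hm : (a + b).dist σ + (a + c).dist σ + (a + d).dist σ + 2 * m = σ) :
    ((m + 1 : ℕ) : ℚ) * (casimir a + casimir b + casimir c + casimir d) =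
      ∑ j ∈ range (m + 1), casimir ((a + c).dist σ + (a + d).dist σ + 2 * j) +
      ∑ j ∈ range (m + 1), casimir ((a + b).dist σ + (a + d).dist σ + 2 * j) +
      ∑ j ∈ range (m + 1), casimir ((a + b).dist σ + (a + c).dist σ + 2 * j) := by
  have hσ' : (a + b + c + d : ℚ) = 2 * σ := by exact_mod_cast hσ
  have hm' : ((a + b).dist σ + (a + c).dist σ + (a + d).dist σ + 2 * m : ℚ) = σ := by
    exact_mod_cast hm
  have hX := cast_dist_sq (R := ℚ) (a + b) σ
  have hY := cast_dist_sq (R := ℚ) (a + c) σ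
  have hZ := cast_dist_sq (R := ℚ) (a + d) σ
  rw [sum_casimir_two_mul, sum_casimir_two_mul, sum_casimir_two_mul]
  simp only [casimir]
  push_cast at *
  linear_combination (-((m : ℚ) + 1) / 2) * (hX + hY + hZ) + ((m : ℚ) + 1) * (1 - a + σ) * hσ'
    - ((m : ℚ) + 1) * ((σ + (a + b).dist σ + (a + c).dist σ + (a + d).dist σ + 2 * m) / 2 + 2) * hm'

theorem stmt_6 (ℓ l₁ l₂ l₃ l₄ : ℕ)
    (h₁ : l₁ ≤ ℓ) (h₂ : l₂ ≤ ℓ) (h₃ : l₃ ≤ ℓ) (h₄ : l₄ ≤ ℓ)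
    (hev : Even (l₁ + l₂ + l₃ + l₄)) (hle : l₁ + l₂ + l₃ + l₄ ≤ 2 * ℓ) :
    ((∑ μ ∈ Finset.range (ℓ + 1),
        slTwoRank ℓ l₁ l₂ μ * slTwoRank ℓ μ l₃ l₄ : ℕ) : ℚ) *
        (casimir l₁ + casimir l₂ + casimir l₃ + casimir l₄) =
      ∑ μ ∈ Finset.range (ℓ + 1), casimir μ *
        ((slTwoRank ℓ l₁ l₂ μ * slTwoRank ℓ l₃ l₄ μ +
          slTwoRank ℓ l₁ l₃ μ * slTwoRank ℓ l₂ l₄ μ +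
          slTwoRank ℓ l₁ l₄ μ * slTwoRank ℓ l₂ l₃ μ : ℕ) : ℚ) := by
  obtain ⟨σ, hσ⟩ := hev.two_dvd
  have hσℓ : σ ≤ ℓ := by omega
  simp only [slTwoRank_rotate ℓ _ l₃ l₄, Nat.cast_add, mul_add (casimir _), sum_add_distrib]
  rcases le_or_gt ((l₁ + l₂).dist σ + (l₁ + l₃).dist σ + (l₁ + l₄).dist σ) σ with hD | hD
  · obtain ⟨m, hm⟩ := exists_add_two_mul_eq hσ hD
    rw [sum_slTwoRank_mul_slTwoRank h₁ h₂ h₃ h₄ hσ hσℓ hm,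
      sum_mul_slTwoRank_mul_slTwoRank _ h₁ h₂ h₃ h₄ hσ hσℓ hm,
      sum_mul_slTwoRank_mul_slTwoRank (m := m) _ h₁ h₃ h₂ h₄ (by omega) hσℓ (by omega),
      sum_mul_slTwoRank_mul_slTwoRank (m := m) _ h₁ h₄ h₂ h₃ (by omega) hσℓ (by omega)]
    exact casimir_sum_pairings hσ hm
  · have h₁₃ := slTwoRank_mul_slTwoRank_eq_zero (ℓ := ℓ) (σ := σ) (a := l₁) (b := l₃) (c := l₂)
      (d := l₄) (by omega) (by omega)
    have h₁₄ := slTwoRank_mul_slTwoRank_eq_zero (ℓ := ℓ) (σ := σ) (a := l₁) (b := l₄) (c := l₂)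
      (d := l₃) (by omega) (by omega)
    simp [slTwoRank_mul_slTwoRank_eq_zero hσ hD, h₁₃, h₁₄]
end

section
/- Let m ≥ 2, let c(x) = x·(m-x)·(m+1)/m as a rational-valued function on {0,…,m-1}, and define N(i,j,k) = 1 if i+j+k ≡ 0 (mod m), else 0, for i,j,k ∈ {0,…,m-1}. For i ≤ j ≤ k ≤ l in {1,…,m-1}, let Deg = (1/(2(m+1)))·[ r·(c(i)+c(j)+c(k)+c(l)) − ∑_{μ=0}^{m-1} c(μ)·( N(i,j,(m-μ) mod m)·N(k,l,μ) + N(i,k,(m-μ) mod m)·N(j,l,μ) + N(i,l,(m-μ) mod m)·N(j,k,μ) ) ], where r = ∑_{μ=0}^{m-1} N(i,j,(m-μ) mod m)·N(μ,k,l). Then Deg = i if i+j+k+l = 2m and j+k ≥ i+l; Deg = m−l if i+j+k+l = 2m and j+k ≤ i+l; and Deg = 0 otherwise (i.e., when i+j+k+l is not equal to 2m, noting i+j+k+l ≡ 0 mod m is required for r ≠ 0). -/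
/-!
Since `N(a, b, (m - μ) mod m) = [μ ≡ a + b]`, every sum over `μ` collapses to its single term
`μ = (a + b) mod m`. Hence `Deg` vanishes unless `m ∣ s := i + j + k + l`, and otherwise equals
`(c(i) + c(j) + c(k) + c(l) - c((i+j) mod m) - c((i+k) mod m) - c((i+l) mod m)) / (2(m+1))`.
As `0 < s < 4m`, the cases are `s = m, 2m, 3m`; reducing each `(i + x) mod m` to `i + x` or
`i + x - m` turns `Deg` into a rational function that simplifies to `0`, `i` or `m - l`, essentially
because `x(m - x) + y(m - y) - (x + y)(m - x - y) = 2xy`.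
-/

open Finset

/-- The rank of the 3-point level-1 conformal block for `sl_m` with weights
`(ϖ_i, ϖ_j, ϖ_k)` (with `ϖ_0 := 0`). -/
def slmRank (m i j k : ℕ) : ℕ := if (i + j + k) % m = 0 then 1 else 0

/-- The normalized Casimir eigenvalue `c(ϖ_x) = x(m-x)(m+1)/m` for `sl_m`. -/
def slmCasimir (m x : ℕ) : ℚ := (x : ℚ) * ((m : ℚ) - (x : ℚ)) * ((m : ℚ) + 1) / (m : ℚ)

/-- The degree on `M̄₀,₄` of the determinant of the level-1 `sl_m` conformal
block bundle with weights `(ϖ_i, ϖ_j, ϖ_k, ϖ_l)`. -/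
def slmDeg (m i j k l : ℕ) : ℚ :=
  (1 / (2 * ((m : ℚ) + 1))) *
    (((∑ μ ∈ Finset.range m, slmRank m i j ((m - μ) % m) * slmRank m μ k l : ℕ) : ℚ) *
        (slmCasimir m i + slmCasimir m j + slmCasimir m k + slmCasimir m l) -
      ∑ μ ∈ Finset.range m, slmCasimir m μ *
        ((slmRank m i j ((m - μ) % m) * slmRank m k l μ +
          slmRank m i k ((m - μ) % m) * slmRank m j l μ +
          slmRank m i l ((m - μ) % m) * slmRank m j k μ : ℕ) : ℚ))

section Rank

variable {m : ℕ}

lemma slmRank_eq_ite (a b c : ℕ) : slmRank m a b c = if m ∣ a + b + c then 1 else 0 := by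
  simp only [slmRank, Nat.dvd_iff_mod_eq_zero]

lemma slmRank_sub_mod {μ : ℕ} (hμ : μ < m) (a b : ℕ) :
    slmRank m a b ((m - μ) % m) = if (a + b) % m = μ then 1 else 0 := by
  have : NeZero m := ⟨by omega⟩
  have hcast : ((a + b + (m - μ) % m : ℕ) : ZMod m) = ((a + b : ℕ) : ZMod m) - μ := by
    push_cast [ZMod.natCast_mod, Nat.cast_sub hμ.le, ZMod.natCast_self]
    ring
  simp only [slmRank_eq_ite, ← ZMod.natCast_eq_zero_iff, hcast, sub_eq_zero,
    ZMod.natCast_eq_natCast_iff', Nat.mod_eq_of_lt hμ]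

lemma sum_slmRank_sub_mod_mul {R : Type*} [NonAssocSemiring R] (hm : 0 < m) (a b : ℕ)
    (f : ℕ → R) :
    ∑ μ ∈ range m, (slmRank m a b ((m - μ) % m) : R) * f μ = f ((a + b) % m) := by
  have hterm : ∀ μ ∈ range m, (slmRank m a b ((m - μ) % m) : R) * f μ
      = if (a + b) % m = μ then f μ else 0 := fun μ hμ => by
    rw [slmRank_sub_mod (mem_range.mp hμ)]
    split_ifs <;> simp
  rw [sum_congr rfl hterm, sum_ite_eq, if_pos (mem_range.mpr (Nat.mod_lt _ hm))]

lemma slmRank_mod_left (a b c : ℕ) : slmRank m (a % m) b c = slmRank m a b c := by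
  simp only [slmRank, add_assoc, Nat.mod_add_mod]

lemma slmRank_mod_right (a b c : ℕ) : slmRank m a b (c % m) = slmRank m a b c := by
  simp only [slmRank, Nat.add_mod_mod]

end Rank

lemma slmDeg_eq_ite {m : ℕ} (hm : 0 < m) (i j k l : ℕ) :
    slmDeg m i j k l = if m ∣ i + j + k + l then
      (slmCasimir m i + slmCasimir m j + slmCasimir m k + slmCasimir m l
        - slmCasimir m ((i + j) % m) - slmCasimir m ((i + k) % m)
        - slmCasimir m ((i + l) % m)) / (2 * (m + 1))
    else 0 := by
  have hpair (a b c d : ℕ) : ∑ μ ∈ range m,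
      slmCasimir m μ * ((slmRank m a b ((m - μ) % m) : ℚ) * slmRank m c d μ) =
      if m ∣ a + b + c + d then slmCasimir m ((a + b) % m) else 0 := by
    simp_rw [mul_left_comm (slmCasimir m _)]
    rw [sum_slmRank_sub_mod_mul hm, slmRank_mod_right, slmRank_eq_ite,
      show c + d + (a + b) = a + b + c + d by ring]
    split_ifs <;> simp
  have hrank : ∑ μ ∈ range m, (slmRank m i j ((m - μ) % m) : ℚ) * slmRank m μ k l =
      if m ∣ i + j + k + l then 1 else 0 := by
    rw [sum_slmRank_sub_mod_mul hm i j (fun μ => (slmRank m μ k l : ℚ)), slmRank_mod_left,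
      slmRank_eq_ite]
    split_ifs <;> simp
  rw [slmDeg]
  push_cast [mul_add, sum_add_distrib]
  rw [hrank, hpair, hpair, hpair, show i + k + j + l = i + j + k + l by ring,
    show i + l + j + k = i + j + k + l by ring]
  split_ifs <;> ring

section Casimir

variable {m : ℕ}

lemma slmCasimir_mod_of_le {a : ℕ} (ha : a ≤ m) : slmCasimir m (a % m) = slmCasimir m a := by
  rcases ha.lt_or_eq with ha | rfl
  · rw [Nat.mod_eq_of_lt ha]
  · simp [slmCasimir]

lemma slmCasimir_mod_of_le_of_le {a : ℕ} (h₁ : m ≤ a) (h₂ : a ≤ 2 * m) :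
    slmCasimir m (a % m) = slmCasimir m (a - m) := by
  rw [Nat.mod_eq_sub_mod h₁, slmCasimir_mod_of_le (by omega)]

end Casimir

section Degree

variable {m i j k l : ℕ}

lemma slmDeg_of_add_eq (hm : 0 < m) (hs : i + j + k + l = m) : slmDeg m i j k l = 0 := by
  rw [slmDeg_eq_ite hm, if_pos (hs ▸ dvd_rfl), slmCasimir_mod_of_le (by omega),
    slmCasimir_mod_of_le (by omega), slmCasimir_mod_of_le (by omega)]
  have hlq : (l : ℚ) = m - i - j - k := by qify at hs; linarith
  have : (m : ℚ) ≠ 0 := by positivity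
  simp only [slmCasimir]
  push_cast
  rw [hlq]
  field_simp
  ring

lemma slmDeg_of_add_eq_two_mul_of_add_le (hm : 0 < m) (hs : i + j + k + l = 2 * m)
    (hij : i + j ≤ m) (hik : i + k ≤ m) (hil : i + l ≤ m) : slmDeg m i j k l = i := by
  rw [slmDeg_eq_ite hm, if_pos (hs ▸ dvd_mul_left m 2), slmCasimir_mod_of_le hij,
    slmCasimir_mod_of_le hik, slmCasimir_mod_of_le hil]
  have hlq : (l : ℚ) = 2 * m - i - j - k := by qify at hs; linarith
  have : (m : ℚ) ≠ 0 := by positivity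
  simp only [slmCasimir]
  push_cast
  rw [hlq]
  field_simp
  ring

lemma slmDeg_of_add_eq_two_mul_of_le_add (hm : 0 < m) (hs : i + j + k + l = 2 * m)
    (hij : i + j ≤ m) (hik : i + k ≤ m) (hil : m ≤ i + l) (hil' : i + l ≤ 2 * m) :
    slmDeg m i j k l = m - l := by
  rw [slmDeg_eq_ite hm, if_pos (hs ▸ dvd_mul_left m 2), slmCasimir_mod_of_le hij,
    slmCasimir_mod_of_le hik, slmCasimir_mod_of_le_of_le hil hil']
  have hlq : (l : ℚ) = 2 * m - i - j - k := by qify at hs; linarith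
  have : (m : ℚ) ≠ 0 := by positivity
  simp only [slmCasimir]
  push_cast [Nat.cast_sub hil]
  rw [hlq]
  field_simp
  ring

lemma slmDeg_of_add_eq_three_mul (hm : 0 < m) (hs : i + j + k + l = 3 * m)
    (hi : i ≤ m) (hj : j ≤ m) (hk : k ≤ m) (hl : l ≤ m) : slmDeg m i j k l = 0 := by
  rw [slmDeg_eq_ite hm, if_pos (hs ▸ dvd_mul_left m 3),
    slmCasimir_mod_of_le_of_le (a := i + j) (by omega) (by omega),
    slmCasimir_mod_of_le_of_le (a := i + k) (by omega) (by omega),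
    slmCasimir_mod_of_le_of_le (a := i + l) (by omega) (by omega)]
  have hlq : (l : ℚ) = 3 * m - i - j - k := by qify at hs; linarith
  have : (m : ℚ) ≠ 0 := by positivity
  simp only [slmCasimir]
  push_cast [Nat.cast_sub (show m ≤ i + j by omega), Nat.cast_sub (show m ≤ i + k by omega),
    Nat.cast_sub (show m ≤ i + l by omega)]
  rw [hlq]
  field_simp
  ring

end Degree

lemma eq_or_eq_or_eq_of_dvd_of_lt {m s : ℕ} (hd : m ∣ s) (h₀ : 0 < s) (h₄ : s < 4 * m) :
    s = m ∨ s = 2 * m ∨ s = 3 * m := by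
  obtain ⟨q, rfl⟩ := hd
  have hq : q < 4 := Nat.lt_of_mul_lt_mul_left (a := m) (by linarith)
  interval_cases q <;> omega

theorem stmt_13_general (m i j k l : ℕ)
    (h1 : 1 ≤ i) (hij : i ≤ j) (hjk : j ≤ k) (hkl : k ≤ l) (hl : l ≤ m - 1) :
    (i + j + k + l = 2 * m → i + l ≤ j + k → slmDeg m i j k l = (i : ℚ)) ∧
    (i + j + k + l = 2 * m → j + k ≤ i + l → slmDeg m i j k l = (m : ℚ) - (l : ℚ)) ∧
    (i + j + k + l ≠ 2 * m → slmDeg m i j k l = 0) := by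
  have hm : 0 < m := by omega
  refine ⟨fun hs hle => slmDeg_of_add_eq_two_mul_of_add_le hm hs (by omega) (by omega) (by omega),
    fun hs hge => slmDeg_of_add_eq_two_mul_of_le_add hm hs (by omega) (by omega) (by omega)
      (by omega), fun hs => ?_⟩
  by_cases hd : m ∣ i + j + k + l
  · rcases eq_or_eq_or_eq_of_dvd_of_lt hd (by omega) (by omega) with h | h | h
    · exact slmDeg_of_add_eq hm h
    · exact absurd h hs
    · exact slmDeg_of_add_eq_three_mul hm h (by omega) (by omega) (by omega) (by omega)
  · rw [slmDeg_eq_ite hm, if_neg hd]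

theorem stmt_13 (m i j k l : ℕ) (hm : 2 ≤ m)
    (h1 : 1 ≤ i) (hij : i ≤ j) (hjk : j ≤ k) (hkl : k ≤ l) (hl : l ≤ m - 1) :
    (i + j + k + l = 2 * m → i + l ≤ j + k → slmDeg m i j k l = (i : ℚ)) ∧
    (i + j + k + l = 2 * m → j + k ≤ i + l → slmDeg m i j k l = (m : ℚ) - (l : ℚ)) ∧
    (i + j + k + l ≠ 2 * m → slmDeg m i j k l = 0) :=
  stmt_13_general m i j k l h1 hij hjk hkl hl
end
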